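/- (Binary Helstrom bound, mixed states, equal priors.) Let ρ₀ and ρ₁ be n×n positive semidefinite complex matrices each of trace 1, and let η₁, …, ηₙ be the (real) eigenvalues of the Hermitian matrix Δ = ρ₁ − ρ₀. Then for every n×n complex matrix Π₀ with Π₀ and I − Π₀ positive semidefinite, the average error probability ½·Re Tr((I − Π₀) ρ₀) + ½·Re Tr(Π₀ ρ₁) is at least ½(1 − Σ_{ηᵢ > 0} ηᵢ), and this minimum is attained by taking Π₀ to be the orthogonal projection onto the span of the eigenvectors of Δ with non-positive eigenvalues. -/

import Mathlib

/-!
Since `Tr ρ₀ = 1`, the error probability of `{Π₀, I − Π₀}` equals `½ (1 + Re Tr (Π₀ Δ))`.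
In an eigenbasis of `Δ` one has `Re Tr (Π₀ Δ) = ∑ qᵢ ηᵢ`, where the diagonal entries `qᵢ` of `Π₀`
in that basis lie in `[0, 1]` because `0 ≤ Π₀ ≤ I`. Hence `Re Tr (Π₀ Δ) ≥ ∑_{ηᵢ ≤ 0} ηᵢ
= Tr Δ − ∑_{ηᵢ > 0} ηᵢ = −∑_{ηᵢ > 0} ηᵢ`, with equality when `qᵢ` is the indicator of `ηᵢ ≤ 0`.
-/

open scoped ComplexOrder

namespace Matrix

variable {ι : Type*} [DecidableEq ι]

lemma re_diag_le_one_of_posSemidef_one_sub {Q : Matrix ι ι ℂ} (hQ : (1 - Q).PosSemidef) (i : ι) :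
    (Q i i).re ≤ 1 := by
  have h := (Complex.le_def.mp (hQ.diag_nonneg (i := i))).1
  simp only [sub_apply, one_apply_eq, Complex.zero_re, Complex.sub_re, Complex.one_re] at h
  linarith

variable [Fintype ι]

lemma posSemidef_one_sub_star_mul_mul {P : Matrix ι ι ℂ} (hP : (1 - P).PosSemidef)
    (U : unitaryGroup ι ℂ) : (1 - star (U : Matrix ι ι ℂ) * P * U).PosSemidef := by
  have h : star (U : Matrix ι ι ℂ) * (1 - P) * U = 1 - star (U : Matrix ι ι ℂ) * P * U := by
    rw [mul_sub, mul_one, sub_mul, Unitary.coe_star_mul_self]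
  rw [← h]
  exact hP.conjTranspose_mul_mul_same _

lemma re_trace_one_sub_mul_add_re_trace_mul {ρ₀ : Matrix ι ι ℂ} (h : ρ₀.trace = 1)
    (ρ₁ P : Matrix ι ι ℂ) :
    ((1 - P) * ρ₀).trace.re + (P * ρ₁).trace.re = 1 + (P * (ρ₁ - ρ₀)).trace.re := by
  rw [sub_mul, mul_sub, one_mul, trace_sub, trace_sub, h, Complex.sub_re, Complex.sub_re,
    Complex.one_re]
  ring

namespace IsHermitian

variable {A : Matrix ι ι ℂ} (hA : A.IsHermitian)

lemma re_trace_eq_sum_eigenvalues : A.trace.re = ∑ i, hA.eigenvalues i := by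
  simp [hA.trace_eq_sum_eigenvalues]

lemma trace_mul_eq_sum_diag_mul_eigenvalues (P : Matrix ι ι ℂ) :
    (P * A).trace = ∑ i,
      (star (hA.eigenvectorUnitary : Matrix ι ι ℂ) * P * hA.eigenvectorUnitary) i i *
        hA.eigenvalues i := by
  conv_lhs => rw [hA.spectral_theorem, Unitary.conjStarAlgAut_apply, ← mul_assoc, ← mul_assoc,
    trace_mul_cycle, ← mul_assoc (star _) P]
  simp [trace, mul_apply, diagonal]

theorem re_trace_sub_sum_pos_eigenvalues_le {P : Matrix ι ι ℂ} (hP : P.PosSemidef)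
    (hP1 : (1 - P).PosSemidef) :
    A.trace.re - ∑ i, (if 0 < hA.eigenvalues i then hA.eigenvalues i else 0) ≤
      (P * A).trace.re := by
  set U := hA.eigenvectorUnitary
  have hQ := hP.conjTranspose_mul_mul_same (U : Matrix ι ι ℂ)
  have hQ1 := posSemidef_one_sub_star_mul_mul hP1 U
  rw [hA.re_trace_eq_sum_eigenvalues, ← Finset.sum_sub_distrib,
    hA.trace_mul_eq_sum_diag_mul_eigenvalues, Complex.re_sum]
  refine Finset.sum_le_sum fun i _ => ?_
  have h0 : 0 ≤ ((star (U : Matrix ι ι ℂ) * P * U) i i).re :=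
    (Complex.le_def.mp (hQ.diag_nonneg (i := i))).1
  have h1 := re_diag_le_one_of_posSemidef_one_sub hQ1 i
  rw [Complex.re_mul_ofReal]
  split_ifs <;> nlinarith

noncomputable def nonposEigenspaceProj : Matrix ι ι ℂ :=
  (hA.eigenvectorUnitary : Matrix ι ι ℂ) *
    diagonal (fun i => if hA.eigenvalues i ≤ 0 then (1 : ℂ) else 0) *
    (hA.eigenvectorUnitary : Matrix ι ι ℂ).conjTranspose

lemma posSemidef_nonposEigenspaceProj : hA.nonposEigenspaceProj.PosSemidef := by
  refine PosSemidef.mul_mul_conjTranspose_same (posSemidef_diagonal_iff.mpr fun i => ?_) _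
  split_ifs <;> norm_num

lemma posSemidef_one_sub_nonposEigenspaceProj : (1 - hA.nonposEigenspaceProj).PosSemidef := by
  have hE : (1 - diagonal fun i => if hA.eigenvalues i ≤ 0 then (1 : ℂ) else 0).PosSemidef := by
    rw [← diagonal_one, diagonal_sub, posSemidef_diagonal_iff]
    intro i
    split_ifs <;> norm_num
  simpa [nonposEigenspaceProj, star_eq_conjTranspose] using
    posSemidef_one_sub_star_mul_mul hE (star hA.eigenvectorUnitary)

lemma re_trace_nonposEigenspaceProj_mul :
    (hA.nonposEigenspaceProj * A).trace.re =
      A.trace.re - ∑ i, (if 0 < hA.eigenvalues i then hA.eigenvalues i else 0) := by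
  have hU := Unitary.coe_star_mul_self hA.eigenvectorUnitary
  rw [hA.re_trace_eq_sum_eigenvalues, ← Finset.sum_sub_distrib,
    hA.trace_mul_eq_sum_diag_mul_eigenvalues, Complex.re_sum, nonposEigenspaceProj,
    ← star_eq_conjTranspose]
  simp only [← mul_assoc, hU, one_mul]
  simp only [mul_assoc, hU, mul_one]
  refine Finset.sum_congr rfl fun i _ => ?_
  by_cases h : 0 < hA.eigenvalues i
  · simp [h, h.not_ge]
  · simp [h, not_lt.mp h]

end IsHermitian

end Matrix

theorem helstrom_bound_mixed_general {n : ℕ} (ρ₀ ρ₁ : Matrix (Fin n) (Fin n) ℂ)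
    (htr₀ : ρ₀.trace = 1) (htr₁ : ρ₁.trace = 1)
    (hΔ : (ρ₁ - ρ₀).IsHermitian) :
    (∀ P₀ : Matrix (Fin n) (Fin n) ℂ, P₀.PosSemidef → (1 - P₀).PosSemidef →
      (1 / 2) * (1 - ∑ i, if 0 < hΔ.eigenvalues i then hΔ.eigenvalues i else 0) ≤
        (1 / 2) * ((1 - P₀) * ρ₀).trace.re + (1 / 2) * (P₀ * ρ₁).trace.re) ∧
    (∀ Pproj : Matrix (Fin n) (Fin n) ℂ,
      Pproj = (hΔ.eigenvectorUnitary : Matrix (Fin n) (Fin n) ℂ) *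
          Matrix.diagonal (fun i => if hΔ.eigenvalues i ≤ 0 then (1 : ℂ) else 0) *
          (hΔ.eigenvectorUnitary : Matrix (Fin n) (Fin n) ℂ).conjTranspose →
      Pproj.PosSemidef ∧ (1 - Pproj).PosSemidef ∧
        (1 / 2) * ((1 - Pproj) * ρ₀).trace.re + (1 / 2) * (Pproj * ρ₁).trace.re =
          (1 / 2) * (1 - ∑ i, if 0 < hΔ.eigenvalues i then hΔ.eigenvalues i else 0)) := by
  have htrΔ : (ρ₁ - ρ₀).trace.re = 0 := by simp [Matrix.trace_sub, htr₀, htr₁]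
  refine ⟨fun P₀ hP₀ hP₀' => ?_, fun Pproj hPproj => ?_⟩
  · have := hΔ.re_trace_sub_sum_pos_eigenvalues_le hP₀ hP₀'
    have := Matrix.re_trace_one_sub_mul_add_re_trace_mul htr₀ ρ₁ P₀
    linarith
  · obtain rfl : Pproj = hΔ.nonposEigenspaceProj := hPproj
    refine ⟨hΔ.posSemidef_nonposEigenspaceProj, hΔ.posSemidef_one_sub_nonposEigenspaceProj, ?_⟩
    have := hΔ.re_trace_nonposEigenspaceProj_mul
    have := Matrix.re_trace_one_sub_mul_add_re_trace_mul htr₀ ρ₁ hΔ.nonposEigenspaceProj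
    linarith

/-- Binary Helstrom bound for mixed states with equal priors: the average error probability of
any binary POVM `{Π₀, I − Π₀}` is at least `½(1 − Σ_{ηᵢ>0} ηᵢ)`, where `ηᵢ` are the eigenvalues
of `Δ = ρ₁ − ρ₀`; the bound is attained by the projection onto the non-positive eigenspaces. -/
theorem helstrom_bound_mixed {n : ℕ} (ρ₀ ρ₁ : Matrix (Fin n) (Fin n) ℂ)
    (hρ₀ : ρ₀.PosSemidef) (hρ₁ : ρ₁.PosSemidef)
    (htr₀ : ρ₀.trace = 1) (htr₁ : ρ₁.trace = 1)
    (hΔ : (ρ₁ - ρ₀).IsHermitian) :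
    (∀ P₀ : Matrix (Fin n) (Fin n) ℂ, P₀.PosSemidef → (1 - P₀).PosSemidef →
      (1 / 2) * (1 - ∑ i, if 0 < hΔ.eigenvalues i then hΔ.eigenvalues i else 0) ≤
        (1 / 2) * ((1 - P₀) * ρ₀).trace.re + (1 / 2) * (P₀ * ρ₁).trace.re) ∧
    (∀ Pproj : Matrix (Fin n) (Fin n) ℂ,
      Pproj = (hΔ.eigenvectorUnitary : Matrix (Fin n) (Fin n) ℂ) *
          Matrix.diagonal (fun i => if hΔ.eigenvalues i ≤ 0 then (1 : ℂ) else 0) *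
          (hΔ.eigenvectorUnitary : Matrix (Fin n) (Fin n) ℂ).conjTranspose →
      Pproj.PosSemidef ∧ (1 - Pproj).PosSemidef ∧
        (1 / 2) * ((1 - Pproj) * ρ₀).trace.re + (1 / 2) * (Pproj * ρ₁).trace.re =
          (1 / 2) * (1 - ∑ i, if 0 < hΔ.eigenvalues i then hΔ.eigenvalues i else 0)) :=
  helstrom_bound_mixed_general ρ₀ ρ₁ htr₀ htr₁ hΔ
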